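/- arXiv:2410.23324 — 2 statements merged into one kernel-verified Lean document; each statement's English description precedes it below -/
import Mathlib

section
/- If (ε_1,...,ε_{2n}) ∈ {0,1}^{2n} lies in the support of C_n (that is, C_n(ε_1,...,ε_{2n}) > 0), then 3 divides the integer Σ_{i=1}^{2n} ε_i · 2^{i-1}. -/
/-! Binary sequences are encoded as `List Bool` (`false = 0`, `true = 1`); the free
abelian group on binary sequences is `List Bool →₀ ℤ`. -/

/-- Extend a map on binary sequences ℤ-linearly to the free abelian group. -/
noncomputable def extendZ (f : List Bool → (List Bool →₀ ℤ)) :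
    (List Bool →₀ ℤ) →+ (List Bool →₀ ℤ) :=
  Finsupp.liftAddHom fun l => zmultiplesHom _ (f l)

/-- Extend a ℤ-valued function on binary sequences ℤ-linearly. -/
noncomputable def liftZ (f : List Bool → ℤ) : (List Bool →₀ ℤ) →+ ℤ :=
  Finsupp.liftAddHom fun l => zmultiplesHom _ (f l)

/-- The reverse map `R`: complement every bit. -/
noncomputable def Rhom : (List Bool →₀ ℤ) →+ (List Bool →₀ ℤ) :=
  extendZ fun l => Finsupp.single (l.map (fun b => !b)) 1

/-- The basic expansion at (0-based) position `i`: a sequence with bits `(0,0)` in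
positions `(i, i+1)` is sent to the sum of itself and the sequence with those bits
replaced by `(1,1)`; all other sequences are fixed. -/
noncomputable def basicExp (i : ℕ) (l : List Bool) : List Bool →₀ ℤ :=
  if l.getD i true = false ∧ l.getD (i + 1) true = false then
    Finsupp.single l 1 + Finsupp.single ((l.set i true).set (i + 1) true) 1
  else Finsupp.single l 1

/-- `EhomAux j` is the composite of the basic expansions at positions `0, …, j-1`
(position `0` applied first). `EhomAux (m-1)` is the expansion map `E_m`. -/
noncomputable def EhomAux : ℕ → ((List Bool →₀ ℤ) →+ (List Bool →₀ ℤ))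
  | 0 => AddMonoidHom.id _
  | (j + 1) => (extendZ (basicExp j)).comp (EhomAux j)

/-- Contraction of the first two bits: `(0,0) ↦ 1`, `(1,1) ↦ 1`, `(1,0) ↦ 0`,
and `(0,1)` kills the generator. -/
def contractFront : Bool → Bool → Option Bool
  | false, false => some true
  | true, true => some true
  | true, false => some false
  | false, true => none

/-- Contraction of the last two bits: `(0,0) ↦ 1`, `(1,1) ↦ 1`, `(0,1) ↦ 0`,
and `(1,0)` kills the generator. -/
def contractBack : Bool → Bool → Option Bool
  | false, false => some true
  | true, true => some true
  | false, true => some false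
  | true, false => none

/-- The contraction map `K` on generators. -/
noncomputable def Kfun (l : List Bool) : List Bool →₀ ℤ :=
  match l, l.reverse with
  | a :: b :: _, c :: d :: _ =>
    match contractFront a b, contractBack d c with
    | some x, some z => Finsupp.single (x :: (((l.drop 2).dropLast.dropLast) ++ [z])) 1
    | _, _ => 0
  | _, _ => 0

/-- The contraction map `K`, extended ℤ-linearly. -/
noncomputable def Khom : (List Bool →₀ ℤ) →+ (List Bool →₀ ℤ) := extendZ Kfun

/-- The base function `C_1`: value `1` on `(0,0)` and `(1,1)`, `0` otherwise. -/
def C1fun (l : List Bool) : ℤ :=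
  if l = [false, false] ∨ l = [true, true] then 1 else 0

/-- `Chom n` is the function `C_n` viewed as a homomorphism from the free abelian group
on binary sequences to `ℤ`, defined by `C_1` as above and the inductive formula
`C_n = C_{n-1} ∘ R_{2n-2} ∘ E_{2n-2} ∘ K_{2n}` (here `EhomAux (2n-3)` is `E_{2n-2}`). -/
noncomputable def Chom : ℕ → ((List Bool →₀ ℤ) →+ ℤ)
  | 0 => liftZ C1fun
  | 1 => liftZ C1fun
  | (n + 2) => (((Chom (n + 1)).comp Rhom).comp (EhomAux (2 * n + 1))).comp Khom

/-- The function `C_n : {0,1}^{2n} → ℤ`. -/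
noncomputable def Cfun (n : ℕ) (ε : Fin (2 * n) → Bool) : ℤ :=
  Chom n (Finsupp.single (List.ofFn ε) 1)

/-! ### Auxiliary machinery: the value mod 3 invariant -/

lemma extendZ_single (f : List Bool → (List Bool →₀ ℤ)) (l : List Bool) :
    extendZ f (Finsupp.single l 1) = f l := by
  simp [extendZ]

lemma liftZ_single (f : List Bool → ℤ) (l : List Bool) :
    liftZ f (Finsupp.single l 1) = f l := by
  simp [liftZ]

/-- The value `Σ ε_i 2^i` of a binary sequence, in `ZMod 3`. -/
def V : List Bool → ZMod 3
  | [] => 0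
  | b :: t => (if b then 1 else 0) + 2 * V t

def bv (b : Bool) : ZMod 3 := if b then 1 else 0

lemma V_cons (b : Bool) (t : List Bool) : V (b :: t) = bv b + 2 * V t := rfl

lemma V_append (u v : List Bool) : V (u ++ v) = V u + 2 ^ u.length * V v := by
  induction u with
  | nil => simp [V]
  | cons b t ih => simp [V, ih, pow_succ]; ring

lemma two_pow_two_mul (n : ℕ) : (2 : ZMod 3) ^ (2 * n) = 1 := by
  induction n with
  | zero => rfl
  | succ n ih => rw [Nat.mul_succ, pow_add, ih]; decide

lemma V_map_not (l : List Bool) :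
    V (l.map fun b => !b) = 2 ^ l.length - 1 - V l := by
  induction l with
  | nil => simp [V]
  | cons b t ih =>
    cases b <;> simp [V, ih, pow_succ] <;> ring

lemma V_set (l : List Bool) (j : ℕ) (h : l.getD j true = false) :
    V (l.set j true) = V l + 2 ^ j := by
  induction l generalizing j with
  | nil => simp [List.getD] at h
  | cons b t ih =>
    cases j with
    | zero =>
      simp [List.getD] at h
      subst h; simp [V]; ring
    | succ j =>
      simp only [List.getD_cons_succ] at h
      simp [List.set, V, ih j h, pow_succ]; ring

lemma getD_set_ne (l : List Bool) (i j : ℕ) (hij : i ≠ j) (b : Bool) :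
    (l.set i b).getD j true = l.getD j true := by
  simp [List.getD, List.getElem?_set_ne hij]

lemma V_set2 (l : List Bool) (j : ℕ) (h0 : l.getD j true = false)
    (h1 : l.getD (j+1) true = false) :
    V ((l.set j true).set (j + 1) true) = V l := by
  have h1' : (l.set j true).getD (j+1) true = false := by
    rw [getD_set_ne l j (j+1) (by omega)]; exact h1
  rw [V_set _ _ h1', V_set _ _ h0]
  have : (2 : ZMod 3) ^ j + 2 ^ (j + 1) = 0 := by
    rw [pow_succ]
    have h3 : (3 : ZMod 3) = 0 := rfl
    linear_combination (2:ZMod 3)^j * h3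
  linear_combination this

lemma front_val (a b x : Bool) (h : contractFront a b = some x) :
    bv x = 1 + 2 * bv a + bv b := by
  cases a <;> cases b <;> simp_all [contractFront] <;> subst h <;> decide

lemma back_val (e f z : Bool) (h : contractBack e f = some z) :
    bv z = 1 + bv e + 2 * bv f := by
  cases e <;> cases f <;> simp_all [contractBack] <;> subst h <;> decide

lemma Kfun_eq (a b e f : Bool) (mid : List Bool) :
    Kfun (a :: b :: (mid ++ [e, f])) =
      match contractFront a b, contractBack e f with
      | some x, some z => Finsupp.single (x :: (mid ++ [z])) 1
      | _, _ => 0 := by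
  have hrev : (a :: b :: (mid ++ [e, f])).reverse = f :: e :: (mid.reverse ++ [b, a]) := by
    simp
  have hmid : ((a :: b :: (mid ++ [e, f])).drop 2).dropLast.dropLast = mid := by
    show (mid ++ [e, f]).dropLast.dropLast = mid
    have : mid ++ [e, f] = (mid ++ [e]) ++ [f] := by simp
    rw [this, List.dropLast_concat, List.dropLast_concat]
  unfold Kfun
  rw [hrev, hmid]

lemma V_K (a b e f x z : Bool) (mid : List Bool) (n : ℕ) (hmid : mid.length = 2 * n)
    (hf : contractFront a b = some x) (hb : contractBack e f = some z) :
    V (x :: (mid ++ [z])) = - V (a :: b :: (mid ++ [e, f])) := by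
  have h2 : (2 : ZMod 3) ^ mid.length = 1 := by rw [hmid, two_pow_two_mul]
  have hVl : V (a :: b :: (mid ++ [e, f])) =
      bv a + 2 * bv b + 4 * V mid + 4 * (bv e + 2 * bv f) := by
    simp only [V_cons, V_append, h2]
    have hnil : V ([] : List Bool) = 0 := rfl
    rw [hnil]; ring
  have hVl' : V (x :: (mid ++ [z])) = bv x + 2 * V mid + 2 * bv z := by
    simp only [V_cons, V_append, h2]
    have hnil : V ([] : List Bool) = 0 := rfl
    rw [hnil]; ring
  rw [hVl, hVl', front_val a b x hf, back_val e f z hb]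
  have h3 : (3 : ZMod 3) = 0 := rfl
  linear_combination (1 + bv a + bv b + 2 * V mid + 2 * bv e + 4 * bv f) * h3

/-- Vanishing of a homomorphism on all generators of given length and value propagates
through the expansion maps. -/
lemma EhomAux_vanish (j : ℕ) (φ : (List Bool →₀ ℤ) →+ ℤ) (m : ℕ) (c : ZMod 3)
    (H : ∀ l : List Bool, l.length = m → V l = c → φ (Finsupp.single l 1) = 0) :
    ∀ l : List Bool, l.length = m → V l = c → φ (EhomAux j (Finsupp.single l 1)) = 0 := by
  induction j generalizing φ with
  | zero => intro l h1 h2; simpa [EhomAux] using H l h1 h2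
  | succ j ih =>
    intro l h1 h2
    have heq : EhomAux (j+1) (Finsupp.single l 1)
        = (extendZ (basicExp j)) (EhomAux j (Finsupp.single l 1)) := rfl
    rw [heq, ← AddMonoidHom.comp_apply]
    refine ih (φ.comp (extendZ (basicExp j))) ?_ l h1 h2
    intro l' hl' hV'
    have : (φ.comp (extendZ (basicExp j))) (Finsupp.single l' 1) = φ (basicExp j l') := by
      rw [AddMonoidHom.comp_apply, extendZ_single]
    rw [this]
    unfold basicExp
    split_ifs with hcond
    · obtain ⟨hc0, hc1⟩ := hcond
      rw [map_add, H l' hl' hV', H _ ?_ ?_, add_zero]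
      · simp [hl']
      · rw [V_set2 l' j hc0 hc1]; exact hV'
    · exact H l' hl' hV'

/-- The main invariant: `C_n` vanishes on generators whose value is nonzero mod 3. -/
lemma Chom_vanish : ∀ (n : ℕ) (l : List Bool), l.length = 2 * n → V l ≠ 0 →
    Chom n (Finsupp.single l 1) = 0
  | 0, l, hl, hV => by
    rw [List.length_eq_zero_iff.mp hl] at hV
    exact absurd rfl hV
  | 1, l, hl, hV => by
    show liftZ C1fun (Finsupp.single l 1) = 0
    rw [liftZ_single]
    unfold C1fun
    split_ifs with h
    · rcases h with rfl | rfl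
      · exact absurd (by decide) hV
      · exact absurd (by decide) hV
    · rfl
  | (n + 2), l, hl, hV => by
    -- decompose l = a :: b :: (mid ++ [e, f])
    obtain ⟨a, l₁, rfl⟩ : ∃ a t, l = a :: t := by
      cases l with
      | nil => simp at hl
      | cons a t => exact ⟨a, t, rfl⟩
    obtain ⟨b, l₂, rfl⟩ : ∃ b t, l₁ = b :: t := by
      cases l₁ with
      | nil => simp at hl; omega
      | cons b t => exact ⟨b, t, rfl⟩
    have hl₂ : l₂.length = 2 * n + 2 := by simp at hl; omega
    obtain ⟨f, e, w, hw⟩ : ∃ f e w, l₂.reverse = f :: e :: w := by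
      cases hr : l₂.reverse with
      | nil => rw [← l₂.reverse_reverse, hr] at hl₂; simp at hl₂
      | cons f t =>
        cases t with
        | nil => rw [← l₂.reverse_reverse, hr] at hl₂; simp at hl₂
        | cons e w => exact ⟨f, e, w, rfl⟩
    have hl₂eq : l₂ = w.reverse ++ [e, f] := by
      rw [← l₂.reverse_reverse, hw]; simp
    set mid := w.reverse with hmiddef
    have hmid : mid.length = 2 * n := by
      rw [hl₂eq] at hl₂; simp at hl₂; simpa [hmiddef] using hl₂
    rw [hl₂eq]
    -- unfold one step of Chom
    show ((((Chom (n + 1)).comp Rhom).comp (EhomAux (2 * n + 1))).comp Khom)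
        (Finsupp.single (a :: b :: (mid ++ [e, f])) 1) = 0
    rw [AddMonoidHom.comp_apply]
    have hK : Khom (Finsupp.single (a :: b :: (mid ++ [e, f])) 1)
        = Kfun (a :: b :: (mid ++ [e, f])) := extendZ_single _ _
    rw [hK, Kfun_eq]
    rcases hcf : contractFront a b with _ | x
    · simp
    rcases hcb : contractBack e f with _ | z
    · simp
    simp only
    rw [AddMonoidHom.comp_apply]
    have hVl' : V (x :: (mid ++ [z])) = - V (a :: b :: (mid ++ [e, f])) :=
      V_K a b e f x z mid n hmid hcf hcb
    have hVne : V (x :: (mid ++ [z])) ≠ 0 := by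
      rw [hVl']
      rw [hl₂eq] at hV
      exact neg_ne_zero.mpr hV
    refine EhomAux_vanish (2 * n + 1) ((Chom (n + 1)).comp Rhom) (2 * (n + 1))
      (V (x :: (mid ++ [z]))) ?_ _ (by simp [hmid]; omega) rfl
    intro l'' hlen hVal
    rw [AddMonoidHom.comp_apply]
    have hR : Rhom (Finsupp.single l'' 1)
        = Finsupp.single (l''.map fun b => !b) 1 := extendZ_single _ _
    rw [hR]
    apply Chom_vanish (n + 1)
    · simpa using hlen
    · rw [V_map_not, hlen, two_pow_two_mul, hVal]
      simpa using hVne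
  termination_by n => n

lemma V_ofFn : ∀ (m : ℕ) (ε : Fin m → Bool),
    V (List.ofFn ε) = ∑ i : Fin m, (if ε i then (2 : ZMod 3) ^ (i : ℕ) else 0)
  | 0, ε => by simp [V]
  | (m + 1), ε => by
    rw [List.ofFn_succ, V_cons, V_ofFn m, Fin.sum_univ_succ, Finset.mul_sum]
    have h2 : ∀ i : Fin m, 2 * (if ε i.succ = true then (2:ZMod 3)^(i:ℕ) else 0)
        = if ε i.succ = true then 2^((i:ℕ)+1) else 0 := by
      intro i; split <;> simp [pow_succ] <;> ring
    simp only [h2, bv, Fin.val_zero, pow_zero, Fin.val_succ]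

/-- If `ε ∈ {0,1}^{2n}` lies in the support of `C_n`, then `3` divides `Σ_i ε_i 2^{i-1}`. -/
theorem three_dvd_of_mem_support_C (n : ℕ) (hn : 1 ≤ n) (ε : Fin (2 * n) → Bool)
    (hε : 0 < Cfun n ε) :
    3 ∣ ∑ i : Fin (2 * n), (if ε i then 2 ^ (i : ℕ) else 0) := by
  have hVzero : V (List.ofFn ε) = 0 := by
    by_contra hne
    have := Chom_vanish n (List.ofFn ε) (by simp) hne
    rw [Cfun, this] at hε
    exact lt_irrefl 0 hε
  have hcast : ((∑ i : Fin (2 * n), (if ε i then (2:ℤ) ^ (i : ℕ) else 0) : ℤ) : ZMod 3) = 0 := by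
    push_cast
    rw [← V_ofFn, hVzero]
  have := (ZMod.intCast_zmod_eq_zero_iff_dvd _ 3).mp hcast
  exact_mod_cast this
end

section
/- (Transfer lemma) Let G be a finite graph with distinguished vertices v₁,...,vₙ and let G′ be the 1-factor addition of G, obtained by attaching a new pendant vertex wᵢ with edge {vᵢ, wᵢ} for each i, with the wᵢ as the new distinguished vertices. Then for every ε ∈ {0,1}^n, the number of perfect matchings of G minus the vertices {vᵢ : εᵢ = 1} equals the number of perfect matchings of G′ minus the vertices {wᵢ : εᵢ = 0}. -/
open SimpleGraph

/-- The number of perfect matchings of a graph. -/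
noncomputable def numPM {V : Type*} (G : SimpleGraph V) : ℕ :=
  Nat.card {M : Subgraph G // M.IsPerfectMatching}

/-- The number of perfect matchings of the subgraph of `G` obtained by deleting the
`i`-th distinguished vertex exactly when `ε i = 1` (`true`). -/
noncomputable def numPMdel {V : Type*} {k : ℕ} (G : SimpleGraph V) (x : Fin k → V)
    (ε : Fin k → Bool) : ℕ :=
  numPM (G.induce {v | ∀ i, ε i = true → v ≠ x i})

/-- The `1`-factor addition of `G` along the distinguished vertices `v i`: attach a new
pendant vertex `w i` (encoded `Sum.inr i`) with edge `{v i, w i}` for each `i`. -/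
def oneFactorAddition {V : Type*} {k : ℕ} (G : SimpleGraph V) (v : Fin k → V) :
    SimpleGraph (V ⊕ Fin k) :=
  SimpleGraph.fromRel (fun a b =>
    (∃ a' b', G.Adj a' b' ∧ a = Sum.inl a' ∧ b = Sum.inl b') ∨
    (∃ i, a = Sum.inl (v i) ∧ b = Sum.inr i))

/-!
A surviving pendant vertex `w i` (one with `ε i = 1`) has `v i` as its only neighbour, so every
perfect matching of `G′ - {w i : ε i = 0}` contains the edge `v i w i`. Deleting these forced
edges gives a perfect matching of `G - {v i : ε i = 1}`, and adding them back is the inverse.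
To avoid juggling subtypes, perfect matchings of an induced subgraph `H[s]` are first identified
with matchings of `H` whose vertex set is exactly `s`.
-/

namespace SimpleGraph.Subgraph

variable {W : Type*} {H : SimpleGraph W}

def isPerfectMatchingInduceEquiv (s : Set W) :
    {M : (H.induce s).Subgraph // M.IsPerfectMatching} ≃
      {M : H.Subgraph // M.verts = s ∧ M.IsMatching} where
  toFun M := ⟨M.1.map (Embedding.induce s).toHom,
    by rw [map_verts, M.2.2.verts_eq_univ, Set.image_univ]; exact Subtype.range_coe,
    M.2.1.map _ Subtype.val_injective⟩
  invFun M := ⟨M.1.comap (Embedding.induce s).toHom, by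
    obtain ⟨M, rfl, hM⟩ := M
    refine isPerfectMatching_iff.2 fun x => ?_
    obtain ⟨y, hxy, huniq⟩ := hM x.2
    exact ⟨⟨y, M.edge_vert hxy.symm⟩, ⟨M.adj_sub hxy, hxy⟩,
      fun z hz => Subtype.ext (huniq z hz.2)⟩⟩
  left_inv M := by
    ext
    · simp [M.2.2.verts_eq_univ]
    · simpa [Relation.Map] using fun h => M.1.adj_sub h
  right_inv M := by
    obtain ⟨M, rfl, -⟩ := M
    ext x y
    · simp
    · simp only [map_adj, comap_adj, Relation.Map]
      constructor
      · rintro ⟨x, y, ⟨-, h⟩, rfl, rfl⟩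
        exact h
      · intro h
        exact ⟨⟨x, M.edge_vert h⟩, ⟨y, M.edge_vert h.symm⟩, ⟨M.adj_sub h, h⟩, rfl, rfl⟩

end SimpleGraph.Subgraph

lemma numPM_induce {W : Type*} (H : SimpleGraph W) (s : Set W) :
    numPM (H.induce s) = Nat.card {M : H.Subgraph // M.verts = s ∧ M.IsMatching} :=
  Nat.card_congr (Subgraph.isPerfectMatchingInduceEquiv s)

def keptVerts {V : Type*} {k : ℕ} (x : Fin k → V) (ε : Fin k → Bool) : Set V :=
  {u | ∀ i, ε i = true → u ≠ x i}

namespace oneFactorAddition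

variable {V : Type*} {k : ℕ} {G : SimpleGraph V} {v : Fin k → V} {ε : Fin k → Bool}

@[simp] lemma adj_inl_inl {a b : V} :
    (oneFactorAddition G v).Adj (.inl a) (.inl b) ↔ G.Adj a b := by
  simpa [oneFactorAddition, G.adj_comm b a] using fun h => G.ne_of_adj h

@[simp] lemma adj_inl_inr {a : V} {i : Fin k} :
    (oneFactorAddition G v).Adj (.inl a) (.inr i) ↔ a = v i := by
  simp [oneFactorAddition]

@[simp] lemma adj_inr_inl {a : V} {i : Fin k} :
    (oneFactorAddition G v).Adj (.inr i) (.inl a) ↔ a = v i := by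
  simp [oneFactorAddition]

@[simp] lemma not_adj_inr_inr {i j : Fin k} :
    ¬ (oneFactorAddition G v).Adj (.inr i) (.inr j) := by
  simp [oneFactorAddition]

lemma notMem_keptVerts {a : V} : a ∉ keptVerts v ε ↔ ∃ i, ε i = true ∧ a = v i := by
  simp [keptVerts]

@[simp] lemma inl_mem_keptVerts_inr (ε : Fin k → Bool) (a : V) :
    (.inl a : V ⊕ Fin k) ∈ keptVerts (fun i => .inr i) ε := by
  simp [keptVerts]

@[simp] lemma inr_mem_keptVerts_inr {i : Fin k} :
    (.inr i : V ⊕ Fin k) ∈ keptVerts (fun i => .inr i) (fun i => !ε i) ↔ ε i = true := by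
  simp only [keptVerts, Set.mem_ofPred_eq, ne_eq, Sum.inr.injEq, Bool.not_eq_true']
  grind

variable (v ε) in
def addPendants (M : G.Subgraph) : (oneFactorAddition G v).Subgraph where
  verts := keptVerts (fun i => .inr i) (fun i => !ε i)
  Adj
    | .inl a, .inl b => M.Adj a b
    | .inl a, .inr i | .inr i, .inl a => ε i = true ∧ a = v i
    | .inr _, .inr _ => False
  adj_sub {x y} h := by
    rcases x with a | i <;> rcases y with b | j
    · exact adj_inl_inl.2 (M.adj_sub h)
    · exact adj_inl_inr.2 h.2
    · exact adj_inr_inl.2 h.2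
    · exact h.elim
  edge_vert {x y} h := by
    rcases x with a | i <;> rcases y with b | j
    · exact inl_mem_keptVerts_inr _ a
    · exact inl_mem_keptVerts_inr _ a
    · exact inr_mem_keptVerts_inr.2 h.1
    · exact h.elim
  symm.symm x y h := by
    rcases x with a | i <;> rcases y with b | j
    · exact M.adj_symm h
    all_goals exact h

variable (ε) in
def removePendants (M : (oneFactorAddition G v).Subgraph) : G.Subgraph where
  verts := keptVerts v ε
  Adj a b := a ∈ keptVerts v ε ∧ b ∈ keptVerts v ε ∧ M.Adj (.inl a) (.inl b)
  adj_sub h := adj_inl_inl.1 (M.adj_sub h.2.2)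
  edge_vert h := h.1
  symm.symm _ _ h := ⟨h.2.1, h.1, h.2.2.symm⟩

lemma isMatching_addPendants (hv : Function.Injective v) {M : G.Subgraph}
    (hverts : M.verts = keptVerts v ε) (hM : M.IsMatching) : (addPendants v ε M).IsMatching := by
  rintro (a | i) hx
  · by_cases ha : a ∈ keptVerts v ε
    · obtain ⟨b, hab, huniq⟩ := hM (hverts ▸ ha)
      refine ⟨.inl b, hab, ?_⟩
      rintro (b' | j) h
      · exact congrArg _ (huniq b' h)
      · exact (ha j h.1 h.2).elim
    · obtain ⟨i, hi, rfl⟩ := notMem_keptVerts.1 ha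
      refine ⟨.inr i, ⟨hi, rfl⟩, ?_⟩
      rintro (b | j) h
      · exact (ha (hverts ▸ M.edge_vert h)).elim
      · rw [hv h.2]
  · refine ⟨.inl (v i), ⟨inr_mem_keptVerts_inr.1 hx, rfl⟩, ?_⟩
    rintro (b | j) h
    · rw [h.2]
    · exact h.elim

section

variable {M : (oneFactorAddition G v).Subgraph} (hM : M.IsMatching)
include hM

lemma adj_pendant_of_mem_verts {i : Fin k} (hi : .inr i ∈ M.verts) :
    M.Adj (.inr i) (.inl (v i)) := by
  obtain ⟨y, hy, -⟩ := hM hi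
  rcases y with a | j
  · rwa [← adj_inr_inl.1 (M.adj_sub hy)]
  · exact (not_adj_inr_inr (M.adj_sub hy)).elim

variable (hverts : M.verts = keptVerts (fun i => .inr i) (fun i => !ε i))
include hverts

lemma mem_keptVerts_of_adj_inl_inl {a b : V} (h : M.Adj (.inl a) (.inl b)) :
    a ∈ keptVerts v ε := by
  rintro i hi rfl
  have hpendant := adj_pendant_of_mem_verts hM (hverts ▸ inr_mem_keptVerts_inr.2 hi)
  exact Sum.inl_ne_inr (hM.eq_of_adj_left h hpendant.symm)

lemma subgraph_adj_inl_inr_iff {a : V} {i : Fin k} :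
    M.Adj (.inl a) (.inr i) ↔ ε i = true ∧ a = v i := by
  refine ⟨fun h => ⟨?_, adj_inl_inr.1 (M.adj_sub h)⟩, ?_⟩
  · exact inr_mem_keptVerts_inr.1 (hverts ▸ M.edge_vert h.symm)
  · rintro ⟨hi, rfl⟩
    exact (adj_pendant_of_mem_verts hM (hverts ▸ inr_mem_keptVerts_inr.2 hi)).symm

lemma isMatching_removePendants : (removePendants ε M).IsMatching := by
  intro a ha
  obtain ⟨y, hy, huniq⟩ := hM (hverts ▸ inl_mem_keptVerts_inr _ a)
  rcases y with b | i
  · exact ⟨b, ⟨ha, mem_keptVerts_of_adj_inl_inl hM hverts hy.symm, hy⟩,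
      fun b' h => Sum.inl_injective (huniq _ h.2.2)⟩
  · obtain ⟨hi, rfl⟩ := (subgraph_adj_inl_inr_iff hM hverts).1 hy
    exact (ha i hi rfl).elim

lemma addPendants_removePendants : addPendants v ε (removePendants ε M) = M := by
  ext x y
  · rw [hverts]; rfl
  · rcases x with a | i <;> rcases y with b | j
    · exact ⟨fun h => h.2.2, fun h => ⟨mem_keptVerts_of_adj_inl_inl hM hverts h,
        mem_keptVerts_of_adj_inl_inl hM hverts h.symm, h⟩⟩
    · exact (subgraph_adj_inl_inr_iff hM hverts).symm
    · exact ((M.adj_comm _ _).trans (subgraph_adj_inl_inr_iff hM hverts)).symm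
    · exact ⟨False.elim, fun h => not_adj_inr_inr (M.adj_sub h)⟩

end

lemma removePendants_addPendants {M : G.Subgraph} (hverts : M.verts = keptVerts v ε) :
    removePendants ε (addPendants v ε M) = M := by
  ext a b
  · rw [hverts]; rfl
  · exact ⟨fun h => h.2.2, fun h => ⟨hverts ▸ M.edge_vert h, hverts ▸ M.edge_vert h.symm, h⟩⟩

variable (ε) in
def addPendantsEquiv (hv : Function.Injective v) :
    {M : G.Subgraph // M.verts = keptVerts v ε ∧ M.IsMatching} ≃
      {M : (oneFactorAddition G v).Subgraph //
        M.verts = keptVerts (fun i => .inr i) (fun i => !ε i) ∧ M.IsMatching} where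
  toFun M := ⟨addPendants v ε M, rfl, isMatching_addPendants hv M.2.1 M.2.2⟩
  invFun M := ⟨removePendants ε M, rfl, isMatching_removePendants M.2.2 M.2.1⟩
  left_inv M := Subtype.ext (removePendants_addPendants M.2.1)
  right_inv M := Subtype.ext (addPendants_removePendants M.2.2 M.2.1)

end oneFactorAddition

theorem transfer_lemma_general {V : Type*} {k : ℕ} (G : SimpleGraph V)
    (v : Fin k → V) (hv : Function.Injective v) (ε : Fin k → Bool) :
    numPMdel G v ε =
      numPMdel (oneFactorAddition G v) (fun i => Sum.inr i) (fun i => !(ε i)) :=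
  (numPM_induce _ _).trans <|
    (Nat.card_congr (oneFactorAddition.addPendantsEquiv ε hv)).trans (numPM_induce _ _).symm

/-- Transfer lemma: for every `ε ∈ {0,1}^k`, the number of perfect matchings of `G`
minus the vertices `{v i : ε i = 1}` equals the number of perfect matchings of the
`1`-factor addition `G′` minus the pendant vertices `{w i : ε i = 0}`. -/
theorem transfer_lemma {V : Type*} [Fintype V] {k : ℕ} (G : SimpleGraph V)
    (v : Fin k → V) (hv : Function.Injective v) (ε : Fin k → Bool) :
    numPMdel G v ε =
      numPMdel (oneFactorAddition G v) (fun i => Sum.inr i) (fun i => !(ε i)) :=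
  transfer_lemma_general G v hv ε
end
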